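/- arXiv:1710.03609 — 4 statements merged into one kernel-verified Lean document; each statement's English description precedes it below -/
import Mathlib

section
/- If a 19-vertex configuration (h,v) on ℤ² satisfies the 19-vertex rule at every vertex, then a height function for it exists: there is a function g : ℤ² → ℤ on the dual lattice such that g(x+1,y) - g(x,y) = v(x+1,y) and g(x,y+1) - g(x,y) = -h(x,y+1) for all (x,y) ∈ ℤ². -/
/-!
The rule at every vertex says exactly that the discrete 1-form on the dual lattice given by the
increments `v (x + 1, y)` (eastward) and `-h (x, y + 1)` (northward) has zero circulation around
every unit square. A closed discrete 1-form on `ℤ²` is exact: integrate it along the row `y = 0`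
and then up the columns.
-/

open Finset

variable {G : Type*} [AddCommGroup G]

noncomputable def Int.discreteAntideriv (d : ℤ → G) (n : ℤ) : G :=
  ∑ i ∈ Ico 0 n, d i - ∑ i ∈ Ico n 0, d i

@[simp]
lemma Int.discreteAntideriv_zero (d : ℤ → G) : Int.discreteAntideriv d 0 = 0 := by
  simp [Int.discreteAntideriv]

lemma Int.discreteAntideriv_add_one_sub (d : ℤ → G) (n : ℤ) :
    Int.discreteAntideriv d (n + 1) - Int.discreteAntideriv d n = d n := by
  unfold Int.discreteAntideriv
  rcases le_or_gt 0 n with hn | hn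
  · rw [← insert_Ico_right_eq_Ico_add_one hn, sum_insert (by simp), Ico_eq_empty_of_le hn,
      Ico_eq_empty_of_le (show (0 : ℤ) ≤ n + 1 by omega)]
    abel
  · rw [← insert_Ico_add_one_left_eq_Ico hn, sum_insert (by simp), Ico_eq_empty_of_le hn.le,
      Ico_eq_empty_of_le (show n + 1 ≤ 0 by omega)]
    abel

lemma Int.eq_apply_zero_of_forall_sub_eq_zero {f : ℤ → G} (hf : ∀ n, f (n + 1) - f n = 0) (n : ℤ) :
    f n = f 0 := by
  induction n using Int.induction_on with
  | zero => rfl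
  | succ k ih => rw [← ih, ← sub_eq_zero, hf]
  | pred k ih => rw [← ih, eq_comm, ← sub_eq_zero, ← hf (-(k : ℤ) - 1), sub_add_cancel]

theorem exists_potential_of_closed (a b : ℤ × ℤ → G)
    (closed : ∀ x y, a (x, y) + b (x + 1, y) - a (x, y + 1) - b (x, y) = 0) :
    ∃ g : ℤ × ℤ → G,
      (∀ x y, g (x + 1, y) - g (x, y) = a (x, y)) ∧ (∀ x y, g (x, y + 1) - g (x, y) = b (x, y)) := by
  let A := Int.discreteAntideriv fun x => a (x, 0)
  let B x := Int.discreteAntideriv fun y => b (x, y)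
  refine ⟨fun p => A p.1 + B p.1 p.2, fun x y => ?_, fun x y => ?_⟩
  · have column : ∀ y, B (x + 1) y - B x y - a (x, y) = B (x + 1) 0 - B x 0 - a (x, 0) :=
      Int.eq_apply_zero_of_forall_sub_eq_zero fun y => by
        rw [← closed x y, ← Int.discreteAntideriv_add_one_sub (fun y => b (x + 1, y)) y,
          ← Int.discreteAntideriv_add_one_sub (fun y => b (x, y)) y]
        abel
    have row : A (x + 1) - A x = a (x, 0) := Int.discreteAntideriv_add_one_sub _ x
    have hcol := column y
    simp only [B, Int.discreteAntideriv_zero, sub_zero] at hcol ⊢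
    linear_combination (norm := abel) row + hcol
  · exact (add_sub_add_left_eq_sub _ _ _).trans (Int.discreteAntideriv_add_one_sub _ y)

theorem height_function_exists_general (h v : ℤ × ℤ → ℤ)
    (rule : ∀ x y : ℤ, h (x - 1, y) + v (x, y - 1) - h (x, y) - v (x, y) = 0) :
    ∃ g : ℤ × ℤ → ℤ,
      (∀ x y : ℤ, g (x + 1, y) - g (x, y) = v (x + 1, y)) ∧
      (∀ x y : ℤ, g (x, y + 1) - g (x, y) = -h (x, y + 1)) :=
  exists_potential_of_closed (fun p => v (p.1 + 1, p.2)) (fun p => -h (p.1, p.2 + 1))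
    fun x y => by
      have := rule (x + 1) (y + 1)
      simp only [add_sub_cancel_right] at this
      dsimp only
      omega

/-- If a 19-vertex configuration `(h, v)` on `ℤ²` satisfies the 19-vertex rule at every
vertex, then a height function for it exists: a function `g : ℤ² → ℤ` on the dual
lattice with `g(x+1,y) - g(x,y) = v(x+1,y)` and `g(x,y+1) - g(x,y) = -h(x,y+1)`. -/
theorem height_function_exists (h v : ℤ × ℤ → ℤ)
    (hh : ∀ p : ℤ × ℤ, h p ∈ ({-1, 0, 1} : Set ℤ))
    (hv : ∀ p : ℤ × ℤ, v p ∈ ({-1, 0, 1} : Set ℤ))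
    (rule : ∀ x y : ℤ, h (x - 1, y) + v (x, y - 1) - h (x, y) - v (x, y) = 0) :
    ∃ g : ℤ × ℤ → ℤ,
      (∀ x y : ℤ, g (x + 1, y) - g (x, y) = v (x + 1, y)) ∧
      (∀ x y : ℤ, g (x, y + 1) - g (x, y) = -h (x, y + 1)) :=
  height_function_exists_general h v rule
end

section
/- Reversing a unidirectional loop preserves legality: let (h,v) be a 19-vertex configuration on ℤ² satisfying the 19-vertex rule at every vertex, and let γ₀, γ₁, ..., γ_k be vertices of ℤ² with γ_k = γ₀, with γ₀, ..., γ_{k-1} pairwise distinct, with each consecutive pair a nearest-neighbor step, and such that the configuration carries an arrow oriented along the direction of traversal on each step's edge (if γ_{i+1} = γ_i + (1,0) then h(γ_i) = 1; if γ_{i+1} = γ_i - (1,0) then h(γ_{i+1}) = -1; if γ_{i+1} = γ_i + (0,1) then v(γ_i) = 1; if γ_{i+1} = γ_i - (0,1) then v(γ_{i+1}) = -1). Then the configuration obtained by negating the edge values on exactly the edges traversed by the loop satisfies the 19-vertex rule at every vertex. -/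
/-- Reversing a unidirectional loop preserves legality: if `(h, v)` satisfies the
19-vertex rule at every vertex and `γ₀, …, γ_k` is a closed, non-self-intersecting
nearest-neighbor loop each of whose steps traverses an edge carrying an arrow
oriented along the direction of traversal, then the configuration `(h', v')`
obtained by negating the edge values on exactly the traversed edges satisfies the
19-vertex rule at every vertex. -/
theorem loop_reversal_preserves_legality (h v h' v' : ℤ × ℤ → ℤ)
    (hh : ∀ p : ℤ × ℤ, h p ∈ ({-1, 0, 1} : Set ℤ))
    (hv : ∀ p : ℤ × ℤ, v p ∈ ({-1, 0, 1} : Set ℤ))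
    (rule : ∀ x y : ℤ, h (x - 1, y) + v (x, y - 1) - h (x, y) - v (x, y) = 0)
    (k : ℕ) (γ : ℕ → ℤ × ℤ)
    (hk : 0 < k)
    (hclosed : γ k = γ 0)
    (hinj : ∀ i j : ℕ, i < k → j < k → γ i = γ j → i = j)
    (hstep : ∀ i : ℕ, i < k →
      (γ (i + 1) = γ i + (1, 0) ∧ h (γ i) = 1) ∨
      (γ (i + 1) = γ i - (1, 0) ∧ h (γ (i + 1)) = -1) ∨
      (γ (i + 1) = γ i + (0, 1) ∧ v (γ i) = 1) ∨
      (γ (i + 1) = γ i - (0, 1) ∧ v (γ (i + 1)) = -1))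
    (hH : ∀ e : ℤ × ℤ,
      ((∃ i < k, (γ i = e ∧ γ (i + 1) = e + (1, 0)) ∨
                 (γ (i + 1) = e ∧ γ i = e + (1, 0))) → h' e = -h e) ∧
      (¬ (∃ i < k, (γ i = e ∧ γ (i + 1) = e + (1, 0)) ∨
                   (γ (i + 1) = e ∧ γ i = e + (1, 0))) → h' e = h e))
    (hV : ∀ e : ℤ × ℤ,
      ((∃ i < k, (γ i = e ∧ γ (i + 1) = e + (0, 1)) ∨
                 (γ (i + 1) = e ∧ γ i = e + (0, 1))) → v' e = -v e) ∧
      (¬ (∃ i < k, (γ i = e ∧ γ (i + 1) = e + (0, 1)) ∨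
                   (γ (i + 1) = e ∧ γ i = e + (0, 1))) → v' e = v e)) :
    ∀ x y : ℤ, h' (x - 1, y) + v' (x, y - 1) - h' (x, y) - v' (x, y) = 0 := by
  intro x y
  have cE : ((x, y) : ℤ × ℤ) + (1, 0) = (x + 1, y) := by simp
  have cW : ((x, y) : ℤ × ℤ) - (1, 0) = (x - 1, y) := by simp
  have cN : ((x, y) : ℤ × ℤ) + (0, 1) = (x, y + 1) := by simp
  have cS : ((x, y) : ℤ × ℤ) - (0, 1) = (x, y - 1) := by simp
  have cE' : ((x - 1, y) : ℤ × ℤ) + (1, 0) = (x, y) := by simp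
  have cN' : ((x, y - 1) : ℤ × ℤ) + (0, 1) = (x, y) := by simp
  by_cases hex : ∃ i, i < k ∧ γ i = (x, y)
  · obtain ⟨i₀, hi₀, hγi₀⟩ := hex
    have uo : ∀ i, i < k → γ i = (x, y) → i = i₀ := fun i hi hgi =>
      hinj i i₀ hi hi₀ (hgi.trans hγi₀.symm)
    have hinstep : ∃ j, j < k ∧ γ (j + 1) = (x, y) ∧
        ∀ i, i < k → γ (i + 1) = (x, y) → i = j := by
      rcases Nat.eq_zero_or_pos i₀ with h0 | h0
      · refine ⟨k - 1, by omega, ?_, ?_⟩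
        · rw [show k - 1 + 1 = k by omega, hclosed, ← h0]; exact hγi₀
        · intro i hi hgi
          rcases Nat.lt_or_ge (i + 1) k with h1 | h1
          · have := uo (i + 1) h1 hgi; omega
          · omega
      · refine ⟨i₀ - 1, by omega, by rw [show i₀ - 1 + 1 = i₀ by omega]; exact hγi₀, ?_⟩
        intro i hi hgi
        rcases Nat.lt_or_ge (i + 1) k with h1 | h1
        · have := uo (i + 1) h1 hgi; omega
        · have hik : i + 1 = k := by omega
          have : (0 : ℕ) = i₀ := uo 0 hk (by rw [← hclosed, ← hik]; exact hgi)
          omega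
    obtain ⟨j₀, hj₀k, hγj₁, ui⟩ := hinstep
    have key1 : ∀ w e : ℤ × ℤ, e + w = (x, y) →
        ((∃ i, i < k ∧ ((γ i = e ∧ γ (i + 1) = e + w) ∨ (γ (i + 1) = e ∧ γ i = e + w))) ↔
          (γ j₀ = e ∨ γ (i₀ + 1) = e)) := by
      intro w e he
      constructor
      · rintro ⟨i, hi, ⟨h1, h2⟩ | ⟨h1, h2⟩⟩
        · have := ui i hi (by rw [h2, he]); subst this; exact Or.inl h1
        · have := uo i hi (by rw [h2, he]); subst this; exact Or.inr h1
      · rintro (hg | hg)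
        · exact ⟨j₀, hj₀k, Or.inl ⟨hg, by rw [he]; exact hγj₁⟩⟩
        · exact ⟨i₀, hi₀, Or.inr ⟨hg, by rw [he]; exact hγi₀⟩⟩
    have key2 : ∀ w e' : ℤ × ℤ, (x, y) + w = e' →
        ((∃ i, i < k ∧ ((γ i = (x, y) ∧ γ (i + 1) = (x, y) + w) ∨
            (γ (i + 1) = (x, y) ∧ γ i = (x, y) + w))) ↔
          (γ (i₀ + 1) = e' ∨ γ j₀ = e')) := by
      intro w e' he
      constructor
      · rintro ⟨i, hi, ⟨h1, h2⟩ | ⟨h1, h2⟩⟩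
        · have := uo i hi h1; subst this; exact Or.inl (he ▸ h2)
        · have := ui i hi h1; subst this; exact Or.inr (he ▸ h2)
      · rintro (hg | hg)
        · exact ⟨i₀, hi₀, Or.inl ⟨hγi₀, by rw [he]; exact hg⟩⟩
        · exact ⟨j₀, hj₀k, Or.inr ⟨hγj₁, by rw [he]; exact hg⟩⟩
    have KW := key1 (1, 0) (x - 1, y) cE'
    have KS := key1 (0, 1) (x, y - 1) cN'
    have KE := key2 (1, 0) (x + 1, y) cE
    have KN := key2 (0, 1) (x, y + 1) cN
    have fW : (γ j₀ = (x - 1, y) ∨ γ (i₀ + 1) = (x - 1, y)) → h' (x - 1, y) = -h (x - 1, y) :=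
      fun t => (hH (x - 1, y)).1 (KW.mpr t)
    have nW : ¬(γ j₀ = (x - 1, y) ∨ γ (i₀ + 1) = (x - 1, y)) → h' (x - 1, y) = h (x - 1, y) :=
      fun t => (hH (x - 1, y)).2 fun c => t (KW.mp c)
    have fS : (γ j₀ = (x, y - 1) ∨ γ (i₀ + 1) = (x, y - 1)) → v' (x, y - 1) = -v (x, y - 1) :=
      fun t => (hV (x, y - 1)).1 (KS.mpr t)
    have nS : ¬(γ j₀ = (x, y - 1) ∨ γ (i₀ + 1) = (x, y - 1)) → v' (x, y - 1) = v (x, y - 1) :=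
      fun t => (hV (x, y - 1)).2 fun c => t (KS.mp c)
    have fE : (γ (i₀ + 1) = (x + 1, y) ∨ γ j₀ = (x + 1, y)) → h' (x, y) = -h (x, y) :=
      fun t => (hH (x, y)).1 (KE.mpr t)
    have nE : ¬(γ (i₀ + 1) = (x + 1, y) ∨ γ j₀ = (x + 1, y)) → h' (x, y) = h (x, y) :=
      fun t => (hH (x, y)).2 fun c => t (KE.mp c)
    have fN : (γ (i₀ + 1) = (x, y + 1) ∨ γ j₀ = (x, y + 1)) → v' (x, y) = -v (x, y) :=
      fun t => (hV (x, y)).1 (KN.mpr t)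
    have nN : ¬(γ (i₀ + 1) = (x, y + 1) ∨ γ j₀ = (x, y + 1)) → v' (x, y) = v (x, y) :=
      fun t => (hV (x, y)).2 fun c => t (KN.mp c)
    rcases hstep i₀ hi₀ with ⟨hq, hO⟩ | ⟨hq, hO⟩ | ⟨hq, hO⟩ | ⟨hq, hO⟩
    · -- out east
      rw [hγi₀] at hq; rw [cE] at hq; rw [hγi₀] at hO
      rcases hstep j₀ hj₀k with ⟨hr, hI⟩ | ⟨hr, hI⟩ | ⟨hr, hI⟩ | ⟨hr, hI⟩
      · rw [hγj₁] at hr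
        have hr' : γ j₀ = (x - 1, y) := by rw [← cW, eq_sub_iff_add_eq]; exact hr.symm
        rw [hr'] at hI
        rw [fE (Or.inl hq), fW (Or.inl hr'),
          nS (by simp only [hq, hr', Prod.mk.injEq]; omega),
          nN (by simp only [hq, hr', Prod.mk.injEq]; omega)]
        linarith [rule x y]
      · rw [hγj₁] at hr hI
        linarith [rule x y]
      · rw [hγj₁] at hr
        have hr' : γ j₀ = (x, y - 1) := by rw [← cS, eq_sub_iff_add_eq]; exact hr.symm
        rw [hr'] at hI
        rw [fE (Or.inl hq), fS (Or.inl hr'),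
          nW (by simp only [hq, hr', Prod.mk.injEq]; omega),
          nN (by simp only [hq, hr', Prod.mk.injEq]; omega)]
        linarith [rule x y]
      · rw [hγj₁] at hr hI
        have hr' : γ j₀ = (x, y + 1) := by rw [← cN]; exact eq_add_of_sub_eq hr.symm
        rw [fE (Or.inl hq), fN (Or.inr hr'),
          nW (by simp only [hq, hr', Prod.mk.injEq]; omega),
          nS (by simp only [hq, hr', Prod.mk.injEq]; omega)]
        linarith [rule x y]
    · -- out west
      rw [hγi₀] at hq; rw [cW] at hq; rw [hq] at hO
      rcases hstep j₀ hj₀k with ⟨hr, hI⟩ | ⟨hr, hI⟩ | ⟨hr, hI⟩ | ⟨hr, hI⟩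
      · rw [hγj₁] at hr
        have hr' : γ j₀ = (x - 1, y) := by rw [← cW, eq_sub_iff_add_eq]; exact hr.symm
        rw [hr'] at hI
        linarith [rule x y]
      · rw [hγj₁] at hr hI
        have hr' : γ j₀ = (x + 1, y) := by rw [← cE]; exact eq_add_of_sub_eq hr.symm
        rw [fW (Or.inr hq), fE (Or.inr hr'),
          nS (by simp only [hq, hr', Prod.mk.injEq]; omega),
          nN (by simp only [hq, hr', Prod.mk.injEq]; omega)]
        linarith [rule x y]
      · rw [hγj₁] at hr
        have hr' : γ j₀ = (x, y - 1) := by rw [← cS, eq_sub_iff_add_eq]; exact hr.symm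
        rw [hr'] at hI
        rw [fW (Or.inr hq), fS (Or.inl hr'),
          nE (by simp only [hq, hr', Prod.mk.injEq]; omega),
          nN (by simp only [hq, hr', Prod.mk.injEq]; omega)]
        linarith [rule x y]
      · rw [hγj₁] at hr hI
        have hr' : γ j₀ = (x, y + 1) := by rw [← cN]; exact eq_add_of_sub_eq hr.symm
        rw [fW (Or.inr hq), fN (Or.inr hr'),
          nE (by simp only [hq, hr', Prod.mk.injEq]; omega),
          nS (by simp only [hq, hr', Prod.mk.injEq]; omega)]
        linarith [rule x y]
    · -- out north
      rw [hγi₀] at hq; rw [cN] at hq; rw [hγi₀] at hO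
      rcases hstep j₀ hj₀k with ⟨hr, hI⟩ | ⟨hr, hI⟩ | ⟨hr, hI⟩ | ⟨hr, hI⟩
      · rw [hγj₁] at hr
        have hr' : γ j₀ = (x - 1, y) := by rw [← cW, eq_sub_iff_add_eq]; exact hr.symm
        rw [hr'] at hI
        rw [fN (Or.inl hq), fW (Or.inl hr'),
          nE (by simp only [hq, hr', Prod.mk.injEq]; omega),
          nS (by simp only [hq, hr', Prod.mk.injEq]; omega)]
        linarith [rule x y]
      · rw [hγj₁] at hr hI
        have hr' : γ j₀ = (x + 1, y) := by rw [← cE]; exact eq_add_of_sub_eq hr.symm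
        rw [fN (Or.inl hq), fE (Or.inr hr'),
          nW (by simp only [hq, hr', Prod.mk.injEq]; omega),
          nS (by simp only [hq, hr', Prod.mk.injEq]; omega)]
        linarith [rule x y]
      · rw [hγj₁] at hr
        have hr' : γ j₀ = (x, y - 1) := by rw [← cS, eq_sub_iff_add_eq]; exact hr.symm
        rw [hr'] at hI
        rw [fN (Or.inl hq), fS (Or.inl hr'),
          nW (by simp only [hq, hr', Prod.mk.injEq]; omega),
          nE (by simp only [hq, hr', Prod.mk.injEq]; omega)]
        linarith [rule x y]
      · rw [hγj₁] at hr hI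
        linarith [rule x y]
    · -- out south
      rw [hγi₀] at hq; rw [cS] at hq; rw [hq] at hO
      rcases hstep j₀ hj₀k with ⟨hr, hI⟩ | ⟨hr, hI⟩ | ⟨hr, hI⟩ | ⟨hr, hI⟩
      · rw [hγj₁] at hr
        have hr' : γ j₀ = (x - 1, y) := by rw [← cW, eq_sub_iff_add_eq]; exact hr.symm
        rw [hr'] at hI
        rw [fS (Or.inr hq), fW (Or.inl hr'),
          nE (by simp only [hq, hr', Prod.mk.injEq]; omega),
          nN (by simp only [hq, hr', Prod.mk.injEq]; omega)]
        linarith [rule x y]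
      · rw [hγj₁] at hr hI
        have hr' : γ j₀ = (x + 1, y) := by rw [← cE]; exact eq_add_of_sub_eq hr.symm
        rw [fS (Or.inr hq), fE (Or.inr hr'),
          nW (by simp only [hq, hr', Prod.mk.injEq]; omega),
          nN (by simp only [hq, hr', Prod.mk.injEq]; omega)]
        linarith [rule x y]
      · rw [hγj₁] at hr
        have hr' : γ j₀ = (x, y - 1) := by rw [← cS, eq_sub_iff_add_eq]; exact hr.symm
        rw [hr'] at hI
        linarith [rule x y]
      · rw [hγj₁] at hr hI
        have hr' : γ j₀ = (x, y + 1) := by rw [← cN]; exact eq_add_of_sub_eq hr.symm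
        rw [fS (Or.inr hq), fN (Or.inr hr'),
          nW (by simp only [hq, hr', Prod.mk.injEq]; omega),
          nE (by simp only [hq, hr', Prod.mk.injEq]; omega)]
        linarith [rule x y]
  · push_neg at hex
    have hne' : ∀ i, i < k → γ (i + 1) ≠ (x, y) := by
      intro i hi
      rcases Nat.lt_or_ge (i + 1) k with h1 | h1
      · exact hex _ h1
      · rw [show i + 1 = k by omega, hclosed]; exact hex 0 hk
    have eW := (hH (x - 1, y)).2 (by
      rintro ⟨i, hi, ⟨h1, h2⟩ | ⟨h1, h2⟩⟩
      · exact hne' i hi (by rw [h2, cE'])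
      · exact hex i hi (by rw [h2, cE']))
    have eE := (hH (x, y)).2 (by
      rintro ⟨i, hi, ⟨h1, h2⟩ | ⟨h1, h2⟩⟩
      · exact hex i hi h1
      · exact hne' i hi h1)
    have eS := (hV (x, y - 1)).2 (by
      rintro ⟨i, hi, ⟨h1, h2⟩ | ⟨h1, h2⟩⟩
      · exact hne' i hi (by rw [h2, cN'])
      · exact hex i hi (by rw [h2, cN']))
    have eN := (hV (x, y)).2 (by
      rintro ⟨i, hi, ⟨h1, h2⟩ | ⟨h1, h2⟩⟩
      · exact hex i hi h1
      · exact hne' i hi h1)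
    rw [eW, eE, eS, eN]; exact rule x y
end

section
/- Reversing a unidirectional 1-loop changes the height only at the enclosed dual point, by exactly 2: let (h,v) satisfy the 19-vertex rule at every vertex of ℤ² and carry a counterclockwise unidirectional 1-loop on the unit square at (x,y), and let (h',v') be obtained by negating the four edge values h(x,y), h(x,y+1), v(x,y), v(x+1,y). If g is a height function for (h,v) and g' is a height function for (h',v') normalized so that g'(x₀,y₀) = g(x₀,y₀) at some dual point (x₀,y₀) ≠ (x,y), then g'(p) = g(p) for every dual point p ≠ (x,y), and g'(x,y) = g(x,y) + 2. -/
/-!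
The difference `g' - g` of the two height functions does not change across any edge whose
value was kept. Only the four edges of the cell `(x, y)` were reversed, so `g' - g` is constant
along every row `b ≠ y` and every column `a ≠ x`; any two dual points other than `(x, y)` are
joined through such a row and column, so the normalization forces `g' - g = 0` off `(x, y)`.
Crossing the top edge of the cell, whose value `-1` became `1`, then gives
`g'(x, y) = g(x, y) + 2`.
-/

theorem Function.Periodic.eq_of_period_one {α : Type*} {F : ℤ → α} (hF : Function.Periodic F 1)
    (m n : ℤ) : F m = F n := by
  simpa using (hF.int_mul_eq m).trans (hF.int_mul_eq n).symm

theorem eq_of_shift_invariant_off_cross {α : Type*} {f : ℤ × ℤ → α} {x y : ℤ}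
    (hrow : ∀ a b, b ≠ y → f (a + 1, b) = f (a, b))
    (hcol : ∀ a b, a ≠ x → f (a, b + 1) = f (a, b))
    {p q : ℤ × ℤ} (hp : p ≠ (x, y)) (hq : q ≠ (x, y)) : f p = f q := by
  have along_row (b : ℤ) (hb : b ≠ y) (a a' : ℤ) : f (a, b) = f (a', b) :=
    Function.Periodic.eq_of_period_one (F := fun a => f (a, b)) (fun a => hrow a b hb) a a'
  have along_col (a : ℤ) (ha : a ≠ x) (b b' : ℤ) : f (a, b) = f (a, b') :=
    Function.Periodic.eq_of_period_one (F := fun b => f (a, b)) (fun b => hcol a b ha) b b'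
  suffices corner : ∀ r : ℤ × ℤ, r ≠ (x, y) → f r = f (x + 1, y + 1) from
    (corner p hp).trans (corner q hq).symm
  rintro ⟨a, b⟩ hr
  by_cases hb : b = y
  · subst hb
    have ha : a ≠ x := by rintro rfl; exact hr rfl
    rw [along_col a ha b (b + 1), along_row (b + 1) (by omega) a (x + 1)]
  · rw [along_row b hb a (x + 1), along_col (x + 1) (by omega) b (y + 1)]

theorem one_loop_reversal_height_change_general (h v : ℤ × ℤ → ℤ)
    (x y : ℤ)
    (hccw : h (x, y) = 1 ∧ v (x + 1, y) = 1 ∧ h (x, y + 1) = -1 ∧ v (x, y) = -1)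
    (h' v' : ℤ × ℤ → ℤ)
    (hh' : ∀ p : ℤ × ℤ, (p = (x, y) ∨ p = (x, y + 1)) → h' p = -h p)
    (hh'' : ∀ p : ℤ × ℤ, ¬(p = (x, y) ∨ p = (x, y + 1)) → h' p = h p)
    (hv'' : ∀ p : ℤ × ℤ, ¬(p = (x, y) ∨ p = (x + 1, y)) → v' p = v p)
    (g g' : ℤ × ℤ → ℤ)
    (hg1 : ∀ a b : ℤ, g (a + 1, b) - g (a, b) = v (a + 1, b))
    (hg2 : ∀ a b : ℤ, g (a, b + 1) - g (a, b) = -h (a, b + 1))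
    (hg'1 : ∀ a b : ℤ, g' (a + 1, b) - g' (a, b) = v' (a + 1, b))
    (hg'2 : ∀ a b : ℤ, g' (a, b + 1) - g' (a, b) = -h' (a, b + 1))
    (x₀ y₀ : ℤ) (hne : (x₀, y₀) ≠ (x, y)) (hnorm : g' (x₀, y₀) = g (x₀, y₀)) :
    (∀ p : ℤ × ℤ, p ≠ (x, y) → g' p = g p) ∧ g' (x, y) = g (x, y) + 2 := by
  have hrow : ∀ a b, b ≠ y → (g' - g) (a + 1, b) = (g' - g) (a, b) := by
    intro a b hb
    have hkept := hv'' (a + 1, b) (by rintro (h | h) <;> simp_all)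
    simp only [Pi.sub_apply]
    linarith [hg1 a b, hg'1 a b]
  have hcol : ∀ a b, a ≠ x → (g' - g) (a, b + 1) = (g' - g) (a, b) := by
    intro a b ha
    have hkept := hh'' (a, b + 1) (by rintro (h | h) <;> simp_all)
    simp only [Pi.sub_apply]
    linarith [hg2 a b, hg'2 a b]
  have hoff : ∀ p : ℤ × ℤ, p ≠ (x, y) → g' p = g p := by
    intro p hp
    have := eq_of_shift_invariant_off_cross hrow hcol hp hne
    simp only [Pi.sub_apply] at this
    linarith
  refine ⟨hoff, ?_⟩
  have htop := hoff (x, y + 1) (by simp)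
  have hreversed := hh' (x, y + 1) (Or.inr rfl)
  linarith [hg2 x y, hg'2 x y, hccw.2.2.1]

/-- Reversing a unidirectional 1-loop changes the height only at the enclosed dual
point, by exactly `2`: if `(h, v)` is legal and carries a counterclockwise
unidirectional 1-loop on the unit square at `(x,y)`, `(h', v')` is obtained by
negating the four edge values of that square, `g` is a height function for `(h, v)`,
and `g'` is a height function for `(h', v')` normalized to agree with `g` at some
dual point `(x₀,y₀) ≠ (x,y)`, then `g' = g` away from `(x,y)` and
`g'(x,y) = g(x,y) + 2`. -/
theorem one_loop_reversal_height_change (h v : ℤ × ℤ → ℤ)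
    (hh : ∀ p : ℤ × ℤ, h p ∈ ({-1, 0, 1} : Set ℤ))
    (hv : ∀ p : ℤ × ℤ, v p ∈ ({-1, 0, 1} : Set ℤ))
    (rule : ∀ a b : ℤ, h (a - 1, b) + v (a, b - 1) - h (a, b) - v (a, b) = 0)
    (x y : ℤ)
    (hccw : h (x, y) = 1 ∧ v (x + 1, y) = 1 ∧ h (x, y + 1) = -1 ∧ v (x, y) = -1)
    (h' v' : ℤ × ℤ → ℤ)
    (hh' : ∀ p : ℤ × ℤ, (p = (x, y) ∨ p = (x, y + 1)) → h' p = -h p)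
    (hh'' : ∀ p : ℤ × ℤ, ¬(p = (x, y) ∨ p = (x, y + 1)) → h' p = h p)
    (hv' : ∀ p : ℤ × ℤ, (p = (x, y) ∨ p = (x + 1, y)) → v' p = -v p)
    (hv'' : ∀ p : ℤ × ℤ, ¬(p = (x, y) ∨ p = (x + 1, y)) → v' p = v p)
    (g g' : ℤ × ℤ → ℤ)
    (hg1 : ∀ a b : ℤ, g (a + 1, b) - g (a, b) = v (a + 1, b))
    (hg2 : ∀ a b : ℤ, g (a, b + 1) - g (a, b) = -h (a, b + 1))
    (hg'1 : ∀ a b : ℤ, g' (a + 1, b) - g' (a, b) = v' (a + 1, b))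
    (hg'2 : ∀ a b : ℤ, g' (a, b + 1) - g' (a, b) = -h' (a, b + 1))
    (x₀ y₀ : ℤ) (hne : (x₀, y₀) ≠ (x, y)) (hnorm : g' (x₀, y₀) = g (x₀, y₀)) :
    (∀ p : ℤ × ℤ, p ≠ (x, y) → g' p = g p) ∧ g' (x, y) = g (x, y) + 2 :=
  one_loop_reversal_height_change_general h v x y hccw h' v' hh' hh'' hv'' g g' hg1 hg2 hg'1 hg'2 x₀
    y₀ hne hnorm
end

section
/- In the scaling limit, the arrow density of a 19-vertex configuration on the square with domain wall boundary condition is at least 1/2: for every ε > 0 there exists N such that for all n ≥ N, every 19-vertex configuration on the n×n square satisfying the domain wall boundary condition has at least (1/2 - ε)·2n(n+1) occupied edges (edges with nonzero value) among its 2n(n+1) edges. -/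
/-- Reindex a sum over `Icc (0:ℤ) n` as a sum over `range (n+1)`. -/
lemma dwbc_sum_Icc_zero (n : ℕ) (f : ℤ → ℤ) :
    ∑ y ∈ Finset.Icc (0 : ℤ) n, f y = ∑ i ∈ Finset.range (n + 1), f i := by
  induction n with
  | zero => simp
  | succ k ih =>
    have hins : Finset.Icc (0 : ℤ) ((k : ℤ) + 1)
        = insert ((k : ℤ) + 1) (Finset.Icc (0 : ℤ) k) := by
      ext z
      simp only [Finset.mem_Icc, Finset.mem_insert]
      omega
    have hc : ((k + 1 : ℕ) : ℤ) = (k : ℤ) + 1 := by push_cast; ring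
    rw [hc, hins, Finset.sum_insert (by simp), ih,
      Finset.sum_range_succ (fun i : ℕ => f i) (k + 1), hc]
    ring

/-- Reindex a sum over `Icc (1:ℤ) n` as a sum over `range n`. -/
lemma dwbc_sum_Icc_one (n : ℕ) (f : ℤ → ℤ) :
    ∑ x ∈ Finset.Icc (1 : ℤ) n, f x = ∑ i ∈ Finset.range n, f (i + 1) := by
  induction n with
  | zero => simp
  | succ k ih =>
    have hins : Finset.Icc (1 : ℤ) ((k : ℤ) + 1)
        = insert ((k : ℤ) + 1) (Finset.Icc (1 : ℤ) k) := by
      ext z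
      simp only [Finset.mem_Icc, Finset.mem_insert]
      omega
    have hc : ((k + 1 : ℕ) : ℤ) = (k : ℤ) + 1 := by push_cast; ring
    rw [hc, hins, Finset.sum_insert (by simp), ih,
      Finset.sum_range_succ (fun i : ℕ => f (i + 1)) k]
    ring

/-- Telescoping sum over `Icc (1:ℤ) n`. -/
lemma dwbc_telescope (n : ℕ) (g : ℤ → ℤ) :
    ∑ x ∈ Finset.Icc (1 : ℤ) n, (g (x - 1) - g x) = g 0 - g n := by
  rw [dwbc_sum_Icc_one]
  have h := Finset.sum_range_sub' (fun i : ℕ => g i) n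
  simp only [Nat.cast_zero] at h
  rw [← h]
  apply Finset.sum_congr rfl
  intro i _
  push_cast
  ring_nf

/-- The absolute value of a sum of `{-1,0,1}`-valued entries is at most the number of
nonzero entries. -/
lemma dwbc_abs_sum_le_card (s : Finset ℤ) (f : ℤ → ℤ)
    (hf : ∀ x ∈ s, f x = -1 ∨ f x = 0 ∨ f x = 1) :
    |∑ x ∈ s, f x| ≤ ((s.filter (fun x => f x ≠ 0)).card : ℤ) := by
  calc |∑ x ∈ s, f x| ≤ ∑ x ∈ s, |f x| := Finset.abs_sum_le_sum_abs _ _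
    _ ≤ ((s.filter (fun x => f x ≠ 0)).card : ℤ) := by
        rw [Finset.card_filter]
        push_cast
        apply Finset.sum_le_sum
        intro x hx
        rcases hf x hx with h | h | h <;> simp [h]

/-- Card of a filtered product decomposed along the first coordinate. -/
lemma dwbc_card_product_fst (s t : Finset ℤ) (P : ℤ × ℤ → Prop) [DecidablePred P] :
    ((s ×ˢ t).filter P).card = ∑ x ∈ s, (t.filter (fun y => P (x, y))).card := by
  rw [Finset.card_filter, Finset.sum_product]
  exact Finset.sum_congr rfl fun x _ => (Finset.card_filter _ _).symm

/-- Card of a filtered product decomposed along the second coordinate. -/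
lemma dwbc_card_product_snd (s t : Finset ℤ) (P : ℤ × ℤ → Prop) [DecidablePred P] :
    ((s ×ˢ t).filter P).card = ∑ y ∈ t, (s.filter (fun x => P (x, y))).card := by
  rw [Finset.card_filter, Finset.sum_product, Finset.sum_comm]
  exact Finset.sum_congr rfl fun y _ => (Finset.card_filter _ _).symm

/-- `n² ≤ 2 · Σ_{i=0}^{n} |2i - n|`. -/
lemma dwbc_gauss (n : ℕ) :
    (n : ℤ) ^ 2 ≤ 2 * ∑ i ∈ Finset.range (n + 1), |2 * (i : ℤ) - n| := by
  have key : ∀ m : ℕ,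
      ((m : ℤ) ^ 2 ≤ 2 * ∑ i ∈ Finset.range (m + 1), |2 * (i : ℤ) - m|) ∧
      (((m : ℤ) + 1) ^ 2 ≤ 2 * ∑ i ∈ Finset.range (m + 2), |2 * (i : ℤ) - (m + 1)|) := by
    intro m
    induction m with
    | zero =>
      constructor
      · simp
      · rw [show (0:ℕ) + 2 = 2 by rfl]
        rw [Finset.sum_range_succ, Finset.sum_range_one]
        norm_num
    | succ k ih =>
      refine ⟨?_, ?_⟩
      · push_cast
        rw [show k + 1 + 1 = k + 2 from by omega]
        exact ih.2
      · -- goal about m = k+1, i.e. sum over range (k+3) of |2i - (k+2)|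
        have hrec : ∑ i ∈ Finset.range (k + 3), |2 * (i : ℤ) - ((k : ℤ) + 2)|
            = (∑ i ∈ Finset.range (k + 1), |2 * (i : ℤ) - k|) + (2 * (k : ℤ) + 4) := by
          rw [Finset.sum_range_succ, Finset.sum_range_succ']
          have h1 : ∀ i : ℕ, |2 * ((i : ℤ) + 1) - ((k : ℤ) + 2)| = |2 * (i : ℤ) - k| := by
            intro i; congr 1; ring
          have h2 : ∑ i ∈ Finset.range (k + 1), |2 * (((i : ℤ)) + 1) - ((k : ℤ) + 2)|
              = ∑ i ∈ Finset.range (k + 1), |2 * (i : ℤ) - k| := by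
            exact Finset.sum_congr rfl fun i _ => h1 i
          push_cast
          push_cast at h2
          rw [h2]
          have ha1 : |(0 : ℤ) - ((k : ℤ) + 2)| = (k : ℤ) + 2 := by
            rw [show (0 : ℤ) - ((k : ℤ) + 2) = -((k : ℤ) + 2) by ring, abs_neg,
              abs_of_nonneg (by omega)]
          have ha2 : |2 * (0 : ℤ) - ((k : ℤ) + 2)| = (k : ℤ) + 2 := by
            rw [show 2 * (0 : ℤ) - ((k : ℤ) + 2) = -((k : ℤ) + 2) by ring, abs_neg,
              abs_of_nonneg (by omega)]
          have hb : |2 * ((k : ℤ) + 2) - ((k : ℤ) + 2)| = (k : ℤ) + 2 := by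
            rw [show 2 * ((k : ℤ) + 2) - ((k : ℤ) + 2) = (k : ℤ) + 2 by ring,
              abs_of_nonneg (by omega)]
          linarith [ha1, ha2, hb]
        push_cast
        rw [show (k : ℤ) + 1 + 1 = (k : ℤ) + 2 from by ring,
          show k + 1 + 2 = k + 3 from by omega, hrec]
        nlinarith [ih.1]
  exact (key n).1

/-- Key integer counting bound. -/
lemma dwbc_key (n : ℕ) (h v : ℤ × ℤ → ℤ)
    (hh : ∀ p ∈ Finset.Icc (0 : ℤ) n ×ˢ Finset.Icc (1 : ℤ) n,
        h p ∈ ({-1, 0, 1} : Set ℤ))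
    (hv : ∀ p ∈ Finset.Icc (1 : ℤ) n ×ˢ Finset.Icc (0 : ℤ) n,
        v p ∈ ({-1, 0, 1} : Set ℤ))
    (hice : ∀ x y : ℤ, 1 ≤ x → x ≤ n → 1 ≤ y → y ≤ n →
        h (x - 1, y) + v (x, y - 1) - h (x, y) - v (x, y) = 0)
    (hbh : ∀ y : ℤ, 1 ≤ y → y ≤ n → h (0, y) = 1 ∧ h (n, y) = -1)
    (hbv : ∀ x : ℤ, 1 ≤ x → x ≤ n → v (x, 0) = -1 ∧ v (x, n) = 1) :
    (n : ℤ) ^ 2 ≤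
      ((((Finset.Icc (0 : ℤ) n ×ˢ Finset.Icc (1 : ℤ) n).filter
          (fun p => h p ≠ 0)).card : ℤ)
       + (((Finset.Icc (1 : ℤ) n ×ˢ Finset.Icc (0 : ℤ) n).filter
          (fun p => v p ≠ 0)).card : ℤ)) := by
  have cardIcc1 : (Finset.Icc (1 : ℤ) n).card = n := by
    rw [Int.card_Icc]
    simp
  -- column sums of h
  have colsum : ∀ k : ℕ, k ≤ n →
      ∑ y ∈ Finset.Icc (1 : ℤ) n, h (k, y) = (n : ℤ) - 2 * k := by
    intro k
    induction k with
    | zero =>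
      intro _
      have : ∀ y ∈ Finset.Icc (1 : ℤ) n, h ((0:ℕ), y) = 1 := by
        intro y hy
        rw [Finset.mem_Icc] at hy
        simpa using (hbh y hy.1 hy.2).1
      rw [Finset.sum_congr rfl this]
      simp [cardIcc1]
    | succ k ih =>
      intro hk
      have hk' : k ≤ n := by omega
      have step : ∑ y ∈ Finset.Icc (1 : ℤ) n, (h ((k : ℤ) + 1, y) - h (k, y))
          = v ((k : ℤ) + 1, 0) - v ((k : ℤ) + 1, n) := by
        have hpt : ∀ y ∈ Finset.Icc (1 : ℤ) n,
            h ((k : ℤ) + 1, y) - h (k, y) = v ((k:ℤ)+1, y - 1) - v ((k:ℤ)+1, y) := by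
          intro y hy
          rw [Finset.mem_Icc] at hy
          have := hice ((k:ℤ)+1) y (by omega) (by exact_mod_cast (by omega : (k:ℤ)+1 ≤ (n:ℤ))) hy.1 hy.2
          have hsimp : ((k : ℤ) + 1) - 1 = (k : ℤ) := by ring
          rw [hsimp] at this
          linarith
        rw [Finset.sum_congr rfl hpt]
        exact dwbc_telescope n (fun t => v ((k:ℤ)+1, t))
      have hb := hbv ((k:ℤ)+1) (by omega) (by exact_mod_cast (by omega : (k:ℤ)+1 ≤ (n:ℤ)))
      have : ∑ y ∈ Finset.Icc (1 : ℤ) n, h ((k:ℤ)+1, y)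
          = ∑ y ∈ Finset.Icc (1 : ℤ) n, h ((k:ℤ), y)
            + ∑ y ∈ Finset.Icc (1 : ℤ) n, (h ((k : ℤ) + 1, y) - h (k, y)) := by
        rw [← Finset.sum_add_distrib]
        apply Finset.sum_congr rfl
        intro y _
        ring
      rw [show ((k + 1 : ℕ) : ℤ) = (k:ℤ) + 1 by push_cast; ring, this, step, ih hk',
        hb.1, hb.2]
      push_cast
      ring
  -- row sums of v
  have rowsum : ∀ k : ℕ, k ≤ n →
      ∑ x ∈ Finset.Icc (1 : ℤ) n, v (x, k) = 2 * (k : ℤ) - n := by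
    intro k
    induction k with
    | zero =>
      intro _
      have : ∀ x ∈ Finset.Icc (1 : ℤ) n, v (x, (0:ℕ)) = -1 := by
        intro x hx
        rw [Finset.mem_Icc] at hx
        simpa using (hbv x hx.1 hx.2).1
      rw [Finset.sum_congr rfl this]
      simp [cardIcc1]
    | succ k ih =>
      intro hk
      have hk' : k ≤ n := by omega
      have step : ∑ x ∈ Finset.Icc (1 : ℤ) n, (v (x, (k : ℤ) + 1) - v (x, k))
          = h (0, (k : ℤ) + 1) - h ((n : ℤ), (k : ℤ) + 1) := by
        have hpt : ∀ x ∈ Finset.Icc (1 : ℤ) n,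
            v (x, (k : ℤ) + 1) - v (x, k) = h (x - 1, (k:ℤ)+1) - h (x, (k:ℤ)+1) := by
          intro x hx
          rw [Finset.mem_Icc] at hx
          have := hice x ((k:ℤ)+1) hx.1 hx.2 (by omega) (by exact_mod_cast (by omega : (k:ℤ)+1 ≤ (n:ℤ)))
          have hsimp : ((k : ℤ) + 1) - 1 = (k : ℤ) := by ring
          rw [hsimp] at this
          linarith
        rw [Finset.sum_congr rfl hpt]
        exact dwbc_telescope n (fun t => h (t, (k:ℤ)+1))
      have hb := hbh ((k:ℤ)+1) (by omega) (by exact_mod_cast (by omega : (k:ℤ)+1 ≤ (n:ℤ)))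
      have : ∑ x ∈ Finset.Icc (1 : ℤ) n, v (x, (k:ℤ)+1)
          = ∑ x ∈ Finset.Icc (1 : ℤ) n, v (x, (k:ℤ))
            + ∑ x ∈ Finset.Icc (1 : ℤ) n, (v (x, (k : ℤ) + 1) - v (x, k)) := by
        rw [← Finset.sum_add_distrib]
        apply Finset.sum_congr rfl
        intro x _
        ring
      rw [show ((k + 1 : ℕ) : ℤ) = (k:ℤ) + 1 by push_cast; ring, this, step, ih hk',
        hb.1, hb.2]
      push_cast
      ring
  -- per-column lower bound for h
  have hcol : ∀ x ∈ Finset.Icc (0 : ℤ) (n : ℤ),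
      |2 * x - (n : ℤ)| ≤
        (((Finset.Icc (1 : ℤ) n).filter (fun y => h (x, y) ≠ 0)).card : ℤ) := by
    intro x hx
    rw [Finset.mem_Icc] at hx
    lift x to ℕ using hx.1 with k
    have hkn : k ≤ n := by exact_mod_cast hx.2
    have habs : |2 * (k:ℤ) - n| = |∑ y ∈ Finset.Icc (1 : ℤ) n, h (k, y)| := by
      rw [colsum k hkn, abs_sub_comm]
    rw [habs]
    apply dwbc_abs_sum_le_card
    intro y hy
    rw [Finset.mem_Icc] at hy
    have hmem : ((k:ℤ), y) ∈ Finset.Icc (0 : ℤ) (n:ℤ) ×ˢ Finset.Icc (1 : ℤ) (n:ℤ) :=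
      Finset.mem_product.mpr ⟨Finset.mem_Icc.mpr ⟨Int.natCast_nonneg k,
        Int.ofNat_le.mpr hkn⟩, Finset.mem_Icc.mpr hy⟩
    have := hh _ hmem
    simpa using this
  -- per-row lower bound for v
  have hrow : ∀ y ∈ Finset.Icc (0 : ℤ) (n : ℤ),
      |2 * y - (n : ℤ)| ≤
        (((Finset.Icc (1 : ℤ) n).filter (fun x => v (x, y) ≠ 0)).card : ℤ) := by
    intro y hy
    rw [Finset.mem_Icc] at hy
    lift y to ℕ using hy.1 with k
    have hkn : k ≤ n := by exact_mod_cast hy.2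
    have habs : |2 * (k:ℤ) - n| = |∑ x ∈ Finset.Icc (1 : ℤ) n, v (x, k)| := by
      rw [rowsum k hkn]
    rw [habs]
    apply dwbc_abs_sum_le_card
    intro x hx
    rw [Finset.mem_Icc] at hx
    have hmem : (x, (k:ℤ)) ∈ Finset.Icc (1 : ℤ) (n:ℤ) ×ˢ Finset.Icc (0 : ℤ) (n:ℤ) :=
      Finset.mem_product.mpr ⟨Finset.mem_Icc.mpr hx,
        Finset.mem_Icc.mpr ⟨Int.natCast_nonneg k, Int.ofNat_le.mpr hkn⟩⟩
    have := hv _ hmem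
    simpa using this
  -- decompose the two cards
  have hdec1 : (((Finset.Icc (0 : ℤ) n ×ˢ Finset.Icc (1 : ℤ) n).filter
      (fun p => h p ≠ 0)).card : ℤ)
      = ∑ x ∈ Finset.Icc (0 : ℤ) n,
          (((Finset.Icc (1 : ℤ) n).filter (fun y => h (x, y) ≠ 0)).card : ℤ) := by
    rw [dwbc_card_product_fst]
    push_cast
    rfl
  have hdec2 : (((Finset.Icc (1 : ℤ) n ×ˢ Finset.Icc (0 : ℤ) n).filter
      (fun p => v p ≠ 0)).card : ℤ)
      = ∑ y ∈ Finset.Icc (0 : ℤ) n,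
          (((Finset.Icc (1 : ℤ) n).filter (fun x => v (x, y) ≠ 0)).card : ℤ) := by
    rw [dwbc_card_product_snd]
    push_cast
    rfl
  have hA : ∑ x ∈ Finset.Icc (0 : ℤ) (n:ℤ), |2 * x - (n : ℤ)|
      ≤ (((Finset.Icc (0 : ℤ) n ×ˢ Finset.Icc (1 : ℤ) n).filter
          (fun p => h p ≠ 0)).card : ℤ) := by
    rw [hdec1]
    exact Finset.sum_le_sum hcol
  have hB : ∑ y ∈ Finset.Icc (0 : ℤ) (n:ℤ), |2 * y - (n : ℤ)|
      ≤ (((Finset.Icc (1 : ℤ) n ×ˢ Finset.Icc (0 : ℤ) n).filter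
          (fun p => v p ≠ 0)).card : ℤ) := by
    rw [hdec2]
    exact Finset.sum_le_sum hrow
  have hS : ∑ x ∈ Finset.Icc (0 : ℤ) (n:ℤ), |2 * x - (n : ℤ)|
      = ∑ i ∈ Finset.range (n + 1), |2 * (i : ℤ) - n| :=
    dwbc_sum_Icc_zero n (fun x => |2 * x - (n : ℤ)|)
  have hg := dwbc_gauss n
  rw [hS] at hA hB
  linarith

/-- In the scaling limit, the arrow density of a 19-vertex configuration on the
`n × n` square with the domain wall boundary condition is at least `1/2`: for every
`ε > 0` there is `N` such that for all `n ≥ N`, every legal configuration with DWBC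
has at least `(1/2 - ε) · 2n(n+1)` occupied edges among its `2n(n+1)` edges. -/
theorem dwbc_density_at_least_half :
    ∀ ε : ℝ, 0 < ε → ∃ N : ℕ, ∀ n : ℕ, N ≤ n →
      ∀ h v : ℤ × ℤ → ℤ,
        (∀ p ∈ Finset.Icc (0 : ℤ) n ×ˢ Finset.Icc (1 : ℤ) n,
            h p ∈ ({-1, 0, 1} : Set ℤ)) →
        (∀ p ∈ Finset.Icc (1 : ℤ) n ×ˢ Finset.Icc (0 : ℤ) n,
            v p ∈ ({-1, 0, 1} : Set ℤ)) →
        (∀ x y : ℤ, 1 ≤ x → x ≤ n → 1 ≤ y → y ≤ n →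
            h (x - 1, y) + v (x, y - 1) - h (x, y) - v (x, y) = 0) →
        (∀ y : ℤ, 1 ≤ y → y ≤ n → h (0, y) = 1 ∧ h (n, y) = -1) →
        (∀ x : ℤ, 1 ≤ x → x ≤ n → v (x, 0) = -1 ∧ v (x, n) = 1) →
        ((1 / 2 - ε) * (2 * n * (n + 1)) : ℝ) ≤
          ((((Finset.Icc (0 : ℤ) n ×ˢ Finset.Icc (1 : ℤ) n).filter
              (fun p => h p ≠ 0)).card : ℝ)
           + (((Finset.Icc (1 : ℤ) n ×ˢ Finset.Icc (0 : ℤ) n).filter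
              (fun p => v p ≠ 0)).card : ℝ)) := by
  intro ε hε
  refine ⟨⌈1 / (2 * ε)⌉₊, fun n hn h v hh hv hice hbh hbv => ?_⟩
  have hkey := dwbc_key n h v hh hv hice hbh hbv
  have hkeyR : ((n : ℝ)) ^ 2 ≤
      ((((Finset.Icc (0 : ℤ) n ×ˢ Finset.Icc (1 : ℤ) n).filter
          (fun p => h p ≠ 0)).card : ℝ)
       + (((Finset.Icc (1 : ℤ) n ×ˢ Finset.Icc (0 : ℤ) n).filter
          (fun p => v p ≠ 0)).card : ℝ)) := by
    exact_mod_cast hkey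
  have hnR : 1 / (2 * ε) ≤ (n : ℝ) := by
    calc 1 / (2 * ε) ≤ (⌈1 / (2 * ε)⌉₊ : ℝ) := Nat.le_ceil _
      _ ≤ (n : ℝ) := by exact_mod_cast hn
  have hεn : 1 ≤ 2 * ε * n := by
    have h2ε : 0 < 2 * ε := by linarith
    rw [div_le_iff₀ h2ε] at hnR
    linarith
  have : ((1 / 2 - ε) * (2 * n * (n + 1)) : ℝ) ≤ (n : ℝ) ^ 2 := by
    nlinarith [hεn, Nat.cast_nonneg (α := ℝ) n]
  linarith
end
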